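/- arXiv:1412.8060 — 9 statements merged into one kernel-verified Lean document; each statement's English description precedes it below -/
import Mathlib

section
/- Let θ₀ ∈ (0,1] and define θ_{k+1} = (√(θ_k⁴ + 4θ_k²) − θ_k²)/2 for all k ≥ 0. Then for all k ≥ 0: 0 < θ_{k+1} ≤ θ_k ≤ 2/(k + 2/θ₀) ≤ 1. -/
lemma theta_step (t : ℝ) (ht : 0 < t) :
    0 < (Real.sqrt (t^4 + 4*t^2) - t^2)/2 ∧
    (Real.sqrt (t^4 + 4*t^2) - t^2)/2 ≤ t ∧
    1/t + 1/2 ≤ 1/((Real.sqrt (t^4 + 4*t^2) - t^2)/2) := by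
  have hsq : Real.sqrt (t^4 + 4*t^2) = t * Real.sqrt (t^2+4) := by
    rw [show t^4 + 4*t^2 = t^2 * (t^2+4) by ring,
      Real.sqrt_mul (sq_nonneg t), Real.sqrt_sq ht.le]
  set r := Real.sqrt (t^2+4) with hr
  have hr2 : r^2 = t^2+4 := Real.sq_sqrt (by positivity)
  have hr0 : 0 ≤ r := Real.sqrt_nonneg _
  have hlt : t < r := by nlinarith
  have hle : r ≤ t + 2 := by nlinarith
  have h2r : 2 ≤ r := by nlinarith
  rw [hsq]
  have hs0 : 0 < (t * r - t^2)/2 := by nlinarith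
  refine ⟨hs0, by nlinarith, ?_⟩
  have key : 1/((t * r - t^2)/2) = (r+t)/(2*t) := by
    rw [div_eq_div_iff (ne_of_gt hs0) (by positivity : (2*t:ℝ) ≠ 0)]
    nlinarith
  rw [key]
  rw [div_add_div _ _ (ne_of_gt ht) (by norm_num), div_le_div_iff₀ (by positivity) (by positivity)]
  nlinarith

/-- Properties of the accelerated stepsize sequence:
`0 < θ_{k+1} ≤ θ_k ≤ 2/(k + 2/θ₀) ≤ 1`. -/
theorem theta_seq_bounds (θ : ℕ → ℝ) (h0 : 0 < θ 0) (h1 : θ 0 ≤ 1)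
    (hrec : ∀ k, θ (k+1) = (Real.sqrt ((θ k)^4 + 4*(θ k)^2) - (θ k)^2)/2) :
    ∀ k : ℕ, 0 < θ (k+1) ∧ θ (k+1) ≤ θ k ∧ θ k ≤ 2/((k : ℝ) + 2/θ 0)
      ∧ 2/((k : ℝ) + 2/θ 0) ≤ 1 := by
  have main : ∀ k : ℕ, 0 < θ k ∧ (k : ℝ)/2 + 1/θ 0 ≤ 1/θ k := by
    intro k
    induction k with
    | zero => exact ⟨h0, by norm_num⟩
    | succ n ih =>
      obtain ⟨hp, hb⟩ := ih
      obtain ⟨h1', h2', h3'⟩ := theta_step (θ n) hp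
      rw [← hrec n] at h1' h2' h3'
      refine ⟨h1', ?_⟩
      push_cast
      calc ((n:ℝ)+1)/2 + 1/θ 0 = ((n:ℝ)/2 + 1/θ 0) + 1/2 := by ring
        _ ≤ 1/θ n + 1/2 := by linarith
        _ ≤ 1/θ (n+1) := h3'
  intro k
  obtain ⟨hp, hb⟩ := main k
  obtain ⟨hp', hb'⟩ := main (k+1)
  obtain ⟨h1', h2', h3'⟩ := theta_step (θ k) hp
  rw [← hrec k] at h2'
  have hden : 0 < (k : ℝ) + 2/θ 0 := by positivity
  refine ⟨hp', h2', ?_, ?_⟩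
  · rw [le_div_iff₀ hden]
    have hmul : ((k:ℝ)/2 + 1/θ 0) * θ k ≤ 1 := by
      have := mul_le_mul_of_nonneg_right hb hp.le
      rwa [one_div_mul_cancel (ne_of_gt hp)] at this
    have hrw : 2/θ 0 = 2*(1/θ 0) := by ring
    nlinarith
  · rw [div_le_one hden]
    have : 2 ≤ 2/θ 0 := by
      rw [le_div_iff₀ h0]; nlinarith
    linarith
end

section
/- Let {φ_k} and {r_k} be sequences of nonnegative reals, θ₀ ∈ (0,1], and suppose φ_{k+1} + θ₀² r_{k+1} ≤ (1 − θ₀)φ_k + θ₀² r_k for all k ≥ 0. Then for all k ≥ 1: (1 + θ₀(k−1)) · min_{l=1,...,k} φ_l ≤ φ_k + θ₀ Σ_{l=1}^{k−1} φ_l ≤ (1 − θ₀)φ₀ + θ₀² r₀. -/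
/-- Analysis of the nonaccelerated recursion with constant stepsize θ₀. -/
theorem constant_stepsize_recursion (φ r : ℕ → ℝ)
    (hφ : ∀ k, 0 ≤ φ k) (hr : ∀ k, 0 ≤ r k)
    (θ0 : ℝ) (hθ0 : 0 < θ0) (hθ1 : θ0 ≤ 1)
    (hrec : ∀ k, φ (k+1) + θ0^2 * r (k+1) ≤ (1-θ0)*φ k + θ0^2 * r k) :
    ∀ k : ℕ, ∀ hk : 1 ≤ k,
      (1 + θ0*((k:ℝ)-1)) * ((Finset.Icc 1 k).inf' (Finset.nonempty_Icc.mpr hk) φ)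
          ≤ φ k + θ0 * ∑ l ∈ Finset.Ico 1 k, φ l
      ∧ φ k + θ0 * ∑ l ∈ Finset.Ico 1 k, φ l ≤ (1-θ0)*φ 0 + θ0^2 * r 0 := by
  have key : ∀ k : ℕ, 1 ≤ k →
      φ k + θ0 * ∑ l ∈ Finset.Ico 1 k, φ l + θ0^2 * r k ≤ (1-θ0)*φ 0 + θ0^2 * r 0 := by
    intro k hk
    induction k with
    | zero => omega
    | succ n ih =>
      rcases Nat.lt_or_ge n 1 with h | hn
      · have hn0 : n = 0 := by omega
        subst hn0
        simpa using hrec 0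
      · have ihn := ih hn
        have hs : ∑ l ∈ Finset.Ico 1 (n+1), φ l = (∑ l ∈ Finset.Ico 1 n, φ l) + φ n :=
          Finset.sum_Ico_succ_top hn φ
        have hrn := hrec n
        rw [hs]
        nlinarith [hφ n, mul_nonneg hθ0.le (hφ n)]
  intro k hk
  have h2' := key k hk
  have h2 : φ k + θ0 * ∑ l ∈ Finset.Ico 1 k, φ l ≤ (1-θ0)*φ 0 + θ0^2 * r 0 := by
    nlinarith [mul_nonneg (sq_nonneg θ0) (hr k)]
  refine ⟨?_, h2⟩
  set m := (Finset.Icc 1 k).inf' (Finset.nonempty_Icc.mpr hk) φ with hm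
  have hmk : m ≤ φ k := Finset.inf'_le _ (by simp [Finset.mem_Icc]; omega)
  have hm0 : 0 ≤ m := by
    obtain ⟨l, hl, hle⟩ := Finset.exists_mem_eq_inf' (Finset.nonempty_Icc.mpr hk) φ
    rw [hm, hle]; exact hφ l
  have hsum : (k-1 : ℕ) • m ≤ ∑ l ∈ Finset.Ico 1 k, φ l := by
    have := Finset.card_nsmul_le_sum (Finset.Ico 1 k) φ m ?_
    · simpa [Nat.card_Ico] using this
    · intro l hl
      refine Finset.inf'_le _ (Finset.mem_Icc.mpr ?_)
      simp only [Finset.mem_Ico] at hl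
      omega
  have hcast : ((k-1:ℕ):ℝ) = (k:ℝ) - 1 := by
    push_cast [Nat.cast_sub hk]; ring
  rw [nsmul_eq_mul, hcast] at hsum
  nlinarith [mul_le_mul_of_nonneg_left hsum hθ0.le]
end

section
/- Let {θ_k} be defined by θ₀ ∈ (0,1] and θ_{k+1} = (√(θ_k⁴ + 4θ_k²) − θ_k²)/2. Let {φ_k}, {r_k} be real sequences with r_k ≥ 0 for all k, satisfying (1−θ_{k+1})/θ_{k+1}² · φ_{k+1} + r_{k+1} ≤ (1−θ_k)/θ_k² · φ_k + r_k for all k ≥ 0. If C := (1−θ₀)φ₀/θ₀² · θ₀² + θ₀² r₀, i.e., C = (1−θ₀)φ₀ + θ₀² r₀ ≥ 0, then for all k ≥ 1: φ_k ≤ 4C/((k−1)θ₀ + 2)². -/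
/-- Analysis of the accelerated recursion: `φ_k ≤ 4C/((k−1)θ₀ + 2)²`. -/
theorem accelerated_recursion (θ : ℕ → ℝ) (hθ0 : 0 < θ 0) (hθ1 : θ 0 ≤ 1)
    (hrec : ∀ k, θ (k+1) = (Real.sqrt ((θ k)^4 + 4*(θ k)^2) - (θ k)^2)/2)
    (φ r : ℕ → ℝ) (hr : ∀ k, 0 ≤ r k)
    (hmain : ∀ k, (1 - θ (k+1))/(θ (k+1))^2 * φ (k+1) + r (k+1)
        ≤ (1 - θ k)/(θ k)^2 * φ k + r k)
    (C : ℝ) (hC : C = (1 - θ 0)*φ 0 + (θ 0)^2 * r 0) (hC0 : 0 ≤ C) :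
    ∀ k : ℕ, 1 ≤ k → φ k ≤ 4*C/(((k:ℝ)-1)*θ 0 + 2)^2 := by
  -- positivity and boundedness of θ
  have hpos : ∀ k, 0 < θ k ∧ θ k ≤ 1 := by
    intro k
    induction k with
    | zero => exact ⟨hθ0, hθ1⟩
    | succ n ih =>
      obtain ⟨ha, ha1⟩ := ih
      have hs : (0:ℝ) ≤ (θ n)^4 + 4*(θ n)^2 := by positivity
      have h2b : 2 * θ (n+1) + (θ n)^2 = Real.sqrt ((θ n)^4 + 4*(θ n)^2) := by
        rw [hrec n]; ring
      have hsq : (2 * θ (n+1) + (θ n)^2)^2 = (θ n)^4 + 4*(θ n)^2 := by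
        rw [h2b]; exact Real.sq_sqrt hs
      have hlt : (θ n)^2 < Real.sqrt ((θ n)^4 + 4*(θ n)^2) := by
        rw [Real.lt_sqrt (by positivity)]
        nlinarith
      have hbpos : 0 < θ (n+1) := by rw [hrec n]; linarith
      constructor
      · exact hbpos
      · nlinarith [sq_nonneg (θ n), mul_pos ha ha]
  -- the key identity θ_{k+1}² + θ_k² θ_{k+1} = θ_k²
  have hident : ∀ k, (θ (k+1))^2 + (θ k)^2 * θ (k+1) = (θ k)^2 := by
    intro k
    have hs : (0:ℝ) ≤ (θ k)^4 + 4*(θ k)^2 := by positivity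
    have h2b : 2 * θ (k+1) + (θ k)^2 = Real.sqrt ((θ k)^4 + 4*(θ k)^2) := by
      rw [hrec k]; ring
    have hsq : (2 * θ (k+1) + (θ k)^2)^2 = (θ k)^4 + 4*(θ k)^2 := by
      rw [h2b]; exact Real.sq_sqrt hs
    nlinarith
  have hid : ∀ k, (1 - θ (k+1))/(θ (k+1))^2 = 1/(θ k)^2 := by
    intro k
    have ha := (hpos k).1
    have hb := (hpos (k+1)).1
    have h := hident k
    field_simp
    nlinarith
  -- monotonicity
  have hmono : ∀ k, (1 - θ k)/(θ k)^2 * φ k + r k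
      ≤ (1 - θ 0)/(θ 0)^2 * φ 0 + r 0 := by
    intro k
    induction k with
    | zero => exact le_refl _
    | succ n ih => exact le_trans (hmain n) ih
  -- inverse growth: 1/θ₀ + k/2 ≤ 1/θ_k
  have hinv : ∀ k : ℕ, 1/θ 0 + (k:ℝ)/2 ≤ 1/θ k := by
    intro k
    induction k with
    | zero => simp
    | succ n ih =>
      have ha := (hpos n).1
      have hb := (hpos (n+1)).1
      have h := hident n
      have hab : θ (n+1) ≤ θ n := by nlinarith [mul_pos ha hb]
      have key : θ (n+1) * (2 + θ n) ≤ 2 * θ n := by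
        nlinarith [mul_pos ha hb, mul_nonneg (mul_nonneg ha.le hb.le) (sub_nonneg.mpr hab)]
      have hstep : 1/θ n + 1/2 ≤ 1/θ (n+1) := by
        rw [div_add_div _ _ ha.ne' two_ne_zero, div_le_div_iff₀ (by positivity) hb]
        nlinarith
      push_cast
      linarith
  intro k hk
  obtain ⟨m, rfl⟩ : ∃ m, k = m + 1 := ⟨k - 1, (Nat.succ_pred_eq_of_pos hk).symm⟩
  have ha := (hpos m).1
  have hb := (hpos (m+1)).1
  -- from monotonicity
  have h1 : 1/(θ m)^2 * φ (m+1) + r (m+1) ≤ C/(θ 0)^2 := by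
    have := hmono (m+1)
    rw [hid m] at this
    have hCeq : C/(θ 0)^2 = (1 - θ 0)/(θ 0)^2 * φ 0 + r 0 := by
      rw [hC]; field_simp
    linarith [this, hCeq ▸ this]
  have h2 : φ (m+1) ≤ (θ m)^2 * C / (θ 0)^2 := by
    have hr' := hr (m+1)
    have : 1/(θ m)^2 * φ (m+1) ≤ C/(θ 0)^2 := by linarith
    have htm2 : (0:ℝ) < (θ m)^2 := by positivity
    calc φ (m+1) = (θ m)^2 * (1/(θ m)^2 * φ (m+1)) := by field_simp
      _ ≤ (θ m)^2 * (C/(θ 0)^2) := by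
          exact mul_le_mul_of_nonneg_left this htm2.le
      _ = (θ m)^2 * C / (θ 0)^2 := by ring
  -- bound on θ m
  have hbd : θ m ≤ 2*θ 0/((m:ℝ)*θ 0 + 2) := by
    have h := hinv m
    have hden : (0:ℝ) < (m:ℝ)*θ 0 + 2 := by positivity
    have heq : (1:ℝ)/θ 0 + (m:ℝ)/2 = ((m:ℝ)*θ 0 + 2)/(2*θ 0) := by
      field_simp; ring
    rw [heq] at h
    rw [div_le_div_iff₀ (by positivity : (0:ℝ) < 2*θ 0) ha] at h
    rw [le_div_iff₀ hden]
    nlinarith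
  have hden : (0:ℝ) < (m:ℝ)*θ 0 + 2 := by positivity
  have hsq : (θ m)^2 ≤ 4*(θ 0)^2/((m:ℝ)*θ 0 + 2)^2 := by
    calc (θ m)^2 ≤ (2*θ 0/((m:ℝ)*θ 0 + 2))^2 := pow_le_pow_left₀ ha.le hbd 2
      _ = 4*(θ 0)^2/((m:ℝ)*θ 0 + 2)^2 := by rw [div_pow]; ring
  have hsq' : (θ m)^2 * ((m:ℝ)*θ 0 + 2)^2 ≤ 4*(θ 0)^2 := by
    rw [le_div_iff₀ (by positivity)] at hsq
    linarith
  have hfin : (θ m)^2 * C / (θ 0)^2 ≤ 4*C/((m:ℝ)*θ 0 + 2)^2 := by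
    rw [div_le_div_iff₀ (by positivity) (by positivity)]
    nlinarith [mul_le_mul_of_nonneg_right hsq' hC0]
  have hgoal : ((↑(m+1):ℝ) - 1)*θ 0 + 2 = (m:ℝ)*θ 0 + 2 := by push_cast; ring
  rw [hgoal]
  linarith
end

section
/- Let f : R^n → R be convex differentiable satisfying f(x+h) ≤ f(x) + ⟨∇f(x),h⟩ + (1/2)‖h‖_v² for all x,h, where ‖h‖_v² = Σ_i v_i h_i² with v_i > 0. Define the accelerated sequence: z₀ = x₀, θ₀ = 1, y_k = (1−θ_k)x_k + θ_k z_k, z_{k+1} = z_k − (1/(v θ_k))·∇f(y_k) (coordinatewise: z_{k+1,i} = z_{k,i} − ∂_i f(y_k)/(v_i θ_k)), x_{k+1} = (1−θ_k)x_k + θ_k z_{k+1}, θ_{k+1} = (√(θ_k⁴+4θ_k²)−θ_k²)/2. Then for any minimizer x* and all k ≥ 1: f(x_k) − f(x*) ≤ 2‖x₀ − x*‖_v²/(k+1)². -/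
/-- Accelerated gradient descent: `f(x_k) − f(x*) ≤ 2‖x₀ − x*‖_v²/(k+1)²`. -/
theorem accelerated_gradient_descent_rate (n : ℕ)
    (f : (Fin n → ℝ) → ℝ) (g : (Fin n → ℝ) → (Fin n → ℝ))
    (v : Fin n → ℝ) (hv : ∀ i, 0 < v i)
    (hconv : ∀ x y : Fin n → ℝ, f x + ∑ i, g x i * (y i - x i) ≤ f y)
    (hsmooth : ∀ x h : Fin n → ℝ,
      f (x + h) ≤ f x + (∑ i, g x i * h i) + (1/2) * ∑ i, v i * (h i)^2)
    (x z : ℕ → (Fin n → ℝ)) (θ : ℕ → ℝ)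
    (hz0 : z 0 = x 0) (hθ0 : θ 0 = 1)
    (hθrec : ∀ k, θ (k+1) = (Real.sqrt ((θ k)^4 + 4*(θ k)^2) - (θ k)^2)/2)
    (hz : ∀ k i, z (k+1) i
      = z k i - (1/(v i * θ k)) * g (fun j => (1-θ k)*x k j + θ k * z k j) i)
    (hx : ∀ k i, x (k+1) i = (1-θ k)*x k i + θ k * z (k+1) i)
    (xstar : Fin n → ℝ) (hmin : ∀ y, f xstar ≤ f y) :
    ∀ k : ℕ, 1 ≤ k →
      f (x k) - f xstar ≤ 2*(∑ i, v i * (x 0 i - xstar i)^2)/((k:ℝ)+1)^2 := by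
  -- positivity of θ
  have hpos : ∀ k, 0 < θ k := by
    intro k
    induction k with
    | zero => rw [hθ0]; norm_num
    | succ k ih =>
      rw [hθrec k]
      have h1 : (θ k)^2 < Real.sqrt ((θ k)^4 + 4*(θ k)^2) := by
        have h2 : (θ k)^2 = Real.sqrt (((θ k)^2)^2) := (Real.sqrt_sq (by positivity)).symm
        rw [h2]
        apply Real.sqrt_lt_sqrt (by positivity)
        nlinarith [ih]
      linarith
  -- key identity for θ
  have hid : ∀ k, (θ (k+1))^2 = (θ k)^2 * (1 - θ (k+1)) := by
    intro k
    have hs : (Real.sqrt ((θ k)^4 + 4*(θ k)^2))^2 = (θ k)^4 + 4*(θ k)^2 :=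
      Real.sq_sqrt (by positivity)
    rw [hθrec k]
    linear_combination (1/4 : ℝ) * hs
  -- θ ≤ 1
  have hle1 : ∀ k, θ k ≤ 1 := by
    intro k
    cases k with
    | zero => rw [hθ0]
    | succ k => nlinarith [hid k, hpos k, sq_nonneg (θ (k+1))]
  -- monotonicity
  have hmono : ∀ k, θ (k+1) ≤ θ k := by
    intro k
    nlinarith [hid k, hpos k, hpos (k+1), hle1 (k+1)]
  -- the rate bound on θ
  have hbound : ∀ k, θ k * ((k:ℝ)+2) ≤ 2 := by
    intro k
    induction k with
    | zero => rw [hθ0]; norm_num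
    | succ k ih =>
      have h5 : θ k * θ (k+1) ≤ 2 * (θ k - θ (k+1)) := by
        nlinarith [hid k, hpos k, hpos (k+1), hmono k,
          mul_nonneg (mul_nonneg (hpos k).le (hpos (k+1)).le) (sub_nonneg.2 (hmono k))]
      have hK : (0:ℝ) ≤ (k:ℝ) := Nat.cast_nonneg k
      push_cast
      nlinarith [h5, ih, hpos k, hpos (k+1),
        mul_nonneg (hpos (k+1)).le (by linarith : (0:ℝ) ≤ 2 - θ k * ((k:ℝ)+2))]
  have hlt1 : ∀ k, θ (k+1) < 1 := by
    intro k
    have hb := hbound (k+1)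
    have : (0:ℝ) ≤ (k:ℝ) := Nat.cast_nonneg k
    push_cast at hb
    nlinarith [hpos (k+1)]
  -- the potential
  set D : ℕ → ℝ := fun m => ∑ i, v i * (z m i - xstar i)^2 with hDdef
  -- per-step inequality
  have P : ∀ k, f (x (k+1)) - f xstar
      ≤ (1 - θ k) * (f (x k) - f xstar) + (θ k)^2/2 * (D k - D (k+1)) := by
    intro k
    have hθk := hpos k
    have hθne : θ k ≠ 0 := hθk.ne'
    set y : Fin n → ℝ := fun j => (1-θ k)*x k j + θ k * z k j with hy
    have hzk : ∀ i, z (k+1) i = z k i - 1/(v i * θ k) * g y i := by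
      intro i; rw [hy]; exact hz k i
    have hxk1 : x (k+1) = y + fun i => -(g y i / v i) := by
      funext i
      simp only [Pi.add_apply]
      rw [hx k i, hzk i, hy]
      have := (hv i).ne'
      field_simp
      ring
    -- smoothness step
    have hA : f (x (k+1)) ≤ f y - (1/2) * ∑ i, (g y i)^2 / v i := by
      have hs := hsmooth y (fun i => -(g y i / v i))
      rw [← hxk1] at hs
      have e1 : ∑ i, g y i * -(g y i / v i) = -∑ i, (g y i)^2 / v i := by
        rw [← Finset.sum_neg_distrib]
        apply Finset.sum_congr rfl
        intro i _
        ring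
      have e2 : ∑ i, v i * (-(g y i / v i))^2 = ∑ i, (g y i)^2 / v i := by
        apply Finset.sum_congr rfl
        intro i _
        have := (hv i).ne'
        field_simp
      rw [e1, e2] at hs
      linarith
    -- convexity step
    have hc1 := hconv y (x k)
    have hc2 := hconv y xstar
    have ecomb : (1-θ k) * (∑ i, g y i * (x k i - y i))
        + θ k * (∑ i, g y i * (xstar i - y i))
        = -(θ k * ∑ i, g y i * (z k i - xstar i)) := by
      rw [Finset.mul_sum, Finset.mul_sum, Finset.mul_sum, ← Finset.sum_add_distrib,
        ← Finset.sum_neg_distrib]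
      apply Finset.sum_congr rfl
      intro i _
      simp only [hy]
      ring
    have hB : f y ≤ (1-θ k) * f (x k) + θ k * f xstar
        + θ k * ∑ i, g y i * (z k i - xstar i) := by
      have h1 : (1-θ k) * (f y + ∑ i, g y i * (x k i - y i)) ≤ (1-θ k) * f (x k) :=
        mul_le_mul_of_nonneg_left hc1 (by linarith [hle1 k])
      have h2 : θ k * (f y + ∑ i, g y i * (xstar i - y i)) ≤ θ k * f xstar :=
        mul_le_mul_of_nonneg_left hc2 hθk.le
      nlinarith [h1, h2, ecomb]
    -- quadratic expansion
    have hDq : D (k+1) = D k - (2/θ k) * (∑ i, g y i * (z k i - xstar i))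
        + (1/(θ k)^2) * (∑ i, (g y i)^2 / v i) := by
      simp only [hDdef]
      rw [Finset.mul_sum, Finset.mul_sum, ← Finset.sum_sub_distrib, ← Finset.sum_add_distrib]
      apply Finset.sum_congr rfl
      intro i _
      rw [hzk i]
      have := (hv i).ne'
      field_simp
      ring
    have hq : (θ k)^2/2 * (D k - D (k+1))
        = θ k * (∑ i, g y i * (z k i - xstar i)) - (1/2) * ∑ i, (g y i)^2 / v i := by
      rw [hDq]
      field_simp
      ring
    linarith [hA, hB, hq]
  -- telescoping the potential
  have Φbound : ∀ k, (f (x (k+1)) - f xstar)/(θ k)^2 + D (k+1)/2 ≤ D 0 / 2 := by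
    intro k
    induction k with
    | zero =>
      have hP := P 0
      rw [hθ0] at hP ⊢
      norm_num at hP ⊢
      linarith
    | succ k ih =>
      have hstep := P (k+1)
      have hθ2 : (0:ℝ) < (θ (k+1))^2 := pow_pos (hpos (k+1)) 2
      have h2 : (f (x (k+2)) - f xstar)/(θ (k+1))^2
          ≤ ((1-θ (k+1))*(f (x (k+1)) - f xstar)
            + (θ (k+1))^2/2*(D (k+1) - D (k+2)))/(θ (k+1))^2 :=
        div_le_div_of_nonneg_right hstep hθ2.le
      have h3 : ((1-θ (k+1))*(f (x (k+1)) - f xstar)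
            + (θ (k+1))^2/2*(D (k+1) - D (k+2)))/(θ (k+1))^2
          = (f (x (k+1)) - f xstar)/(θ k)^2 + D (k+1)/2 - D (k+2)/2 := by
        have hidk := hid k
        have hne1 : θ k ≠ 0 := (hpos k).ne'
        have hne2 : θ (k+1) ≠ 0 := (hpos (k+1)).ne'
        field_simp
        linear_combination (-2*(f (x (k+1)) - f xstar)) * hidk
      linarith [h2, h3, ih]
  -- conclusion
  intro k hk
  obtain ⟨m, rfl⟩ : ∃ m, k = m + 1 := ⟨k-1, (Nat.succ_pred_eq_of_pos hk).symm⟩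
  have hb := Φbound m
  have hD0 : D 0 = ∑ i, v i * (x 0 i - xstar i)^2 := by
    simp only [hDdef, hz0]
  have hDpos : 0 ≤ D (m+1) := Finset.sum_nonneg fun i _ => mul_nonneg (hv i).le (sq_nonneg _)
  have hD0pos : 0 ≤ D 0 := Finset.sum_nonneg fun i _ => mul_nonneg (hv i).le (sq_nonneg _)
  have hp : 0 < (θ m)^2 := pow_pos (hpos m) 2
  have h1 : f (x (m+1)) - f xstar ≤ (θ m)^2 * (D 0 / 2) := by
    have h4 : (f (x (m+1)) - f xstar)/(θ m)^2 ≤ D 0 / 2 := by linarith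
    calc f (x (m+1)) - f xstar = (f (x (m+1)) - f xstar)/(θ m)^2 * (θ m)^2 := by
          rw [div_mul_cancel₀ _ hp.ne']
      _ ≤ D 0 / 2 * (θ m)^2 := by
          exact mul_le_mul_of_nonneg_right h4 hp.le
      _ = (θ m)^2 * (D 0 / 2) := by ring
  have hm2 : (0:ℝ) < (m:ℝ)+2 := by positivity
  have hbm := hbound m
  have h2 : (θ m)^2 * (D 0 / 2) ≤ 2 * D 0 / ((m:ℝ)+2)^2 := by
    rw [le_div_iff₀ (by positivity : (0:ℝ) < ((m:ℝ)+2)^2)]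
    nlinarith [mul_nonneg hD0pos
      (mul_nonneg (by linarith : (0:ℝ) ≤ 2 - θ m*((m:ℝ)+2))
        (by nlinarith [hpos m] : (0:ℝ) ≤ 2 + θ m*((m:ℝ)+2)))]
  have hfinal : f (x (m+1)) - f xstar ≤ 2 * D 0 / ((m:ℝ)+2)^2 := le_trans h1 h2
  rw [hD0] at hfinal
  push_cast
  convert hfinal using 2
  ring
end

section
/- Let f : R^n → R be convex differentiable, S a proper sampling with probabilities p ∈ (0,1]^n, and v ∈ R^n positive with (f,S) ∼ ESO(v). Fix y ∈ R^n and a sequence θ_k ∈ (0,1]. Let the ALPHA iterates (smooth case) be: z₀ = x₀, y_k = (1−θ_k)x_k + θ_k z_k; z_{k+1,i} = z_{k,i} − (p_i/(v_i θ_k))∂_i f(y_k) for i ∈ S_k and z_{k+1,i} = z_{k,i} otherwise; x_{k+1} = y_k + θ_k p^{-1}·(z_{k+1} − z_k). Then for all k ≥ 0, conditionally on the history: E_k[f(x_{k+1}) + (θ_k²/2)‖z_{k+1} − y‖²_{v∘p^{-2}}] ≤ f(x_k) + (θ_k²/2)‖z_k − y‖²_{v∘p^{-2}} − θ_k(f(x_k)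 − f(y)). -/
open Finset

private lemma alpha_aux (P V t G Z W : ℝ) (hP : P ≠ 0) (hV : V ≠ 0) (ht : t ≠ 0) :
    P*G*(-G/V) + 1/2*(V*P*(-G/V)^2)
      + t^2/2*((V/P^2)*(P*((Z - P/(V*t)*G) - W)^2 + (1-P)*(Z-W)^2))
    = -(t*(G*(Z-W))) + t^2/2*((V/P^2)*(Z-W)^2) := by
  field_simp
  ring

/-- Key one-step recursion for smooth ALPHA (Lemma 3.2 of the paper), conditionally
on the history: the expectation over the sampling of
`f(x_{k+1}) + (θ²/2)‖z_{k+1} − y‖²_{v∘p⁻²}` is controlled. -/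
theorem alpha_smooth_key_recursion (n : ℕ) (μ : Finset (Fin n) → ℝ)
    (hμ0 : ∀ S, 0 ≤ μ S) (hμ1 : ∑ S : Finset (Fin n), μ S = 1)
    (p : Fin n → ℝ)
    (hpdef : ∀ i, p i = ∑ S : Finset (Fin n), if i ∈ S then μ S else 0)
    (hp0 : ∀ i, 0 < p i) (hp1 : ∀ i, p i ≤ 1)
    (v : Fin n → ℝ) (hv : ∀ i, 0 < v i)
    (f : (Fin n → ℝ) → ℝ) (g : (Fin n → ℝ) → (Fin n → ℝ))
    (hconv : ∀ x y : Fin n → ℝ, f x + ∑ i, g x i * (y i - x i) ≤ f y)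
    (heso : ∀ x h : Fin n → ℝ,
      (∑ S : Finset (Fin n), μ S * f (x + fun i => if i ∈ S then h i else 0))
        ≤ f x + (∑ i, p i * g x i * h i) + (1/2) * ∑ i, v i * p i * (h i)^2)
    (θ : ℝ) (hθ0 : 0 < θ) (hθ1 : θ ≤ 1)
    (x z w : Fin n → ℝ) :
    let y : Fin n → ℝ := fun i => (1-θ)*x i + θ*z i
    let ztil : Fin n → ℝ := fun i => z i - (p i/(v i * θ)) * g y i
    let znext : Finset (Fin n) → Fin n → ℝ := fun S i => if i ∈ S then ztil i else z i
    let xnext : Finset (Fin n) → Fin n → ℝ := fun S i => y i + (θ/p i)*(znext S i - z i)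
    (∑ S : Finset (Fin n), μ S *
        (f (xnext S) + θ^2/2 * ∑ i, (v i/(p i)^2) * (znext S i - w i)^2))
      ≤ (f x + θ^2/2 * ∑ i, (v i/(p i)^2) * (z i - w i)^2) - θ*(f x - f w) := by
  intro y ztil znext xnext
  have hθ' : θ ≠ 0 := hθ0.ne'
  have hp' : ∀ i, p i ≠ 0 := fun i => (hp0 i).ne'
  have hv' : ∀ i, v i ≠ 0 := fun i => (hv i).ne'
  set h : Fin n → ℝ := fun i => -(g y i) / v i with hh
  have hxnext : ∀ S : Finset (Fin n),
      xnext S = y + fun i => if i ∈ S then h i else 0 := by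
    intro S; funext i
    simp only [xnext, znext, ztil, hh, Pi.add_apply]
    by_cases hi : i ∈ S <;> simp [hi]
    field_simp [hθ', hp' i, hv' i]
  -- expectation of an "if i ∈ S" quantity
  have hexp : ∀ (a b : ℝ) (i : Fin n),
      (∑ S : Finset (Fin n), μ S * (if i ∈ S then a else b))
        = p i * a + (1 - p i) * b := by
    intro a b i
    have h1 : ∀ S : Finset (Fin n), μ S * (if i ∈ S then a else b)
        = (if i ∈ S then μ S else 0) * a + (μ S - if i ∈ S then μ S else 0) * b := by
      intro S; by_cases hi : i ∈ S <;> simp [hi]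
    simp only [h1]
    rw [Finset.sum_add_distrib, ← Finset.sum_mul, ← Finset.sum_mul,
      Finset.sum_sub_distrib, hμ1, ← hpdef]
  -- split expectation
  have hsplit : (∑ S : Finset (Fin n), μ S *
        (f (xnext S) + θ^2/2 * ∑ i, (v i/(p i)^2) * (znext S i - w i)^2))
      = (∑ S : Finset (Fin n), μ S * f (xnext S))
        + (∑ S : Finset (Fin n), μ S * (θ^2/2 * ∑ i, (v i/(p i)^2) * (znext S i - w i)^2)) := by
    rw [← Finset.sum_add_distrib]
    exact Finset.sum_congr rfl fun S _ => by ring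
  -- compute second term
  have hE2 : (∑ S : Finset (Fin n), μ S * (θ^2/2 * ∑ i, (v i/(p i)^2) * (znext S i - w i)^2))
      = θ^2/2 * ∑ i, (v i/(p i)^2) *
          (p i * (ztil i - w i)^2 + (1 - p i) * (z i - w i)^2) := by
    have step : ∀ S : Finset (Fin n), μ S * (θ^2/2 * ∑ i, (v i/(p i)^2) * (znext S i - w i)^2)
        = ∑ i, θ^2/2 * ((v i/(p i)^2) *
            (μ S * (if i ∈ S then (ztil i - w i)^2 else (z i - w i)^2))) := by
      intro S
      rw [Finset.mul_sum, Finset.mul_sum]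
      refine Finset.sum_congr rfl fun i _ => ?_
      simp only [znext]
      by_cases hi : i ∈ S <;> simp [hi] <;> ring
    simp only [step]
    rw [Finset.sum_comm, Finset.mul_sum]
    refine Finset.sum_congr rfl fun i _ => ?_
    rw [← Finset.mul_sum, ← Finset.mul_sum, hexp]
  rw [hsplit, hE2]
  have hE1 := heso y h
  simp only [← hxnext] at hE1
  have key : f y + (∑ i, p i * g y i * h i) + (1/2) * ∑ i, v i * p i * (h i)^2
      + θ^2/2 * ∑ i, (v i/(p i)^2) *
          (p i * (ztil i - w i)^2 + (1 - p i) * (z i - w i)^2)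
      = f y - θ * (∑ i, g y i * (z i - w i))
        + θ^2/2 * ∑ i, (v i/(p i)^2) * (z i - w i)^2 := by
    have : ∀ i : Fin n, p i * g y i * h i + (1/2) * (v i * p i * (h i)^2)
        + θ^2/2 * ((v i/(p i)^2) * (p i * (ztil i - w i)^2 + (1 - p i) * (z i - w i)^2))
        = -(θ * (g y i * (z i - w i))) + θ^2/2 * ((v i/(p i)^2) * (z i - w i)^2) := by
      intro i
      simp only [ztil, hh]
      exact alpha_aux (p i) (v i) θ (g y i) (z i) (w i) (hp' i) (hv' i) hθ'
    calc f y + (∑ i, p i * g y i * h i) + (1/2) * ∑ i, v i * p i * (h i)^2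
        + θ^2/2 * ∑ i, (v i/(p i)^2) *
            (p i * (ztil i - w i)^2 + (1 - p i) * (z i - w i)^2)
        = f y + ∑ i, (p i * g y i * h i + (1/2) * (v i * p i * (h i)^2)
            + θ^2/2 * ((v i/(p i)^2) * (p i * (ztil i - w i)^2 + (1 - p i) * (z i - w i)^2))) := by
          rw [Finset.sum_add_distrib, Finset.sum_add_distrib, ← Finset.mul_sum, ← Finset.mul_sum]
          ring
      _ = f y + ∑ i, (-(θ * (g y i * (z i - w i))) + θ^2/2 * ((v i/(p i)^2) * (z i - w i)^2)) := by
          rw [Finset.sum_congr rfl fun i _ => this i]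
      _ = f y - θ * (∑ i, g y i * (z i - w i)) + θ^2/2 * ∑ i, (v i/(p i)^2) * (z i - w i)^2 := by
          rw [Finset.sum_add_distrib, Finset.sum_neg_distrib, ← Finset.mul_sum, ← Finset.mul_sum]
          ring
  -- convexity step
  have hcv : f y - θ * (∑ i, g y i * (z i - w i)) ≤ (1-θ) * f x + θ * f w := by
    have h1 := hconv y x
    have h2 := hconv y w
    have hsum : θ * (∑ i, g y i * (w i - z i))
        = (1-θ) * (∑ i, g y i * (x i - y i)) + θ * (∑ i, g y i * (w i - y i)) := by
      rw [Finset.mul_sum, Finset.mul_sum, Finset.mul_sum, ← Finset.sum_add_distrib]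
      refine Finset.sum_congr rfl fun i _ => ?_
      simp only [y]; ring
    have hθ1' : 0 ≤ 1 - θ := by linarith
    have hneg : (∑ i, g y i * (w i - z i)) = -∑ i, g y i * (z i - w i) := by
      rw [← Finset.sum_neg_distrib]
      exact Finset.sum_congr rfl fun i _ => by ring
    rw [hneg] at hsum
    nlinarith [mul_le_mul_of_nonneg_left h1 hθ1', mul_le_mul_of_nonneg_left h2 hθ0.le,
      hsum]
  have hfin : f y - θ * (∑ i, g y i * (z i - w i))
      + θ^2/2 * ∑ i, (v i/(p i)^2) * (z i - w i)^2
      ≤ (f x + θ^2/2 * ∑ i, (v i/(p i)^2) * (z i - w i)^2) - θ*(f x - f w) := by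
    nlinarith [hcv]

  calc (∑ S : Finset (Fin n), μ S * f (xnext S))
        + θ^2/2 * ∑ i, (v i/(p i)^2) *
            (p i * (ztil i - w i)^2 + (1 - p i) * (z i - w i)^2)
      ≤ f y + (∑ i, p i * g y i * h i) + (1/2) * (∑ i, v i * p i * (h i)^2)
        + θ^2/2 * ∑ i, (v i/(p i)^2) *
            (p i * (ztil i - w i)^2 + (1 - p i) * (z i - w i)^2) := by linarith [hE1]
    _ = f y - θ * (∑ i, g y i * (z i - w i))
        + θ^2/2 * ∑ i, (v i/(p i)^2) * (z i - w i)^2 := key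
    _ ≤ _ := hfin
end

section
/- Under the hypotheses of the key recursion for smooth ALPHA with constant stepsize θ_k = θ₀ ∈ (0,1] for all k, the iterates satisfy, for any y ∈ R^n and all k ≥ 1: max{ E[f(x̂_k)], min_{l=1..k} E[f(x_l)] } − f(y) ≤ C/((k−1)θ₀ + 1), where x̂_k = (x_k + θ₀ Σ_{l=1}^{k−1} x_l)/(1 + (k−1)θ₀) and C = (1−θ₀)(f(x₀) − f(y)) + (θ₀²/2)‖x₀ − y‖²_{v∘p^{-2}}. -/
open Finset

/-- Expectation of a functional of the trajectory with respect to the first `k`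
samplings, each drawn independently according to `μ`. -/
noncomputable def Ehist (n k : ℕ) (μ : Finset (Fin n) → ℝ)
    (φ : (ℕ → Finset (Fin n)) → ℝ) : ℝ :=
  ∑ h : Fin k → Finset (Fin n),
    (∏ j, μ (h j)) * φ (fun j => if hj : j < k then h ⟨j, hj⟩ else ∅)

section AlphaAux

variable {n k : ℕ} {μ : Finset (Fin n) → ℝ} {φ ψ : (ℕ → Finset (Fin n)) → ℝ}

lemma Ehist_congr (h : ∀ ω, φ ω = ψ ω) : Ehist n k μ φ = Ehist n k μ ψ := by
  simp only [Ehist, h]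

lemma Ehist_succ : Ehist n (k+1) μ φ
    = Ehist n k μ (fun ω => ∑ S : Finset (Fin n), μ S * φ (Function.update ω k S)) := by
  rw [Ehist, ← Equiv.sum_comp (Fin.snocEquiv (fun _ => Finset (Fin n)))]
  rw [Fintype.sum_prod_type, Finset.sum_comm]
  rw [Ehist, Finset.sum_congr rfl]
  intro g _
  rw [Finset.mul_sum]
  refine Finset.sum_congr rfl fun S _ => ?_
  set sn : Fin (k+1) → Finset (Fin n) := Fin.snoc g S with hsn
  have h1 : (Fin.snocEquiv (fun _ => Finset (Fin n)) (S, g)) = sn := by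
    funext j; rfl
  rw [h1, Fin.prod_univ_castSucc]
  simp only [hsn, Fin.snoc_castSucc, Fin.snoc_last]
  have h2 : (fun j => if hj : j < k + 1 then sn ⟨j, hj⟩ else ∅)
      = Function.update (fun j => if hj : j < k then g ⟨j, hj⟩ else ∅) k S := by
    funext j
    rcases lt_trichotomy j k with hj | rfl | hj
    · rw [Function.update_of_ne (by omega)]
      simp only [dif_pos hj, dif_pos (by omega : j < k+1)]
      have : (⟨j, by omega⟩ : Fin (k+1)) = Fin.castSucc ⟨j, hj⟩ := rfl
      rw [this, hsn, Fin.snoc_castSucc]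
    · rw [Function.update_self]
      simp only [dif_pos (by omega : j < j+1)]
      have : (⟨j, by omega⟩ : Fin (j+1)) = Fin.last j := rfl
      rw [this, hsn, Fin.snoc_last]
    · rw [Function.update_of_ne (by omega)]
      simp only [dif_neg (by omega : ¬ j < k+1), dif_neg (by omega : ¬ j < k)]
  rw [h2]; ring

lemma Ehist_add : Ehist n k μ (fun ω => φ ω + ψ ω) = Ehist n k μ φ + Ehist n k μ ψ := by
  simp only [Ehist, mul_add, Finset.sum_add_distrib]

lemma Ehist_smul (c : ℝ) : Ehist n k μ (fun ω => c * φ ω) = c * Ehist n k μ φ := by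
  simp only [Ehist, Finset.mul_sum]; exact Finset.sum_congr rfl fun _ _ => by ring

lemma Ehist_le (hμ0 : ∀ S, 0 ≤ μ S) (h : ∀ ω, φ ω ≤ ψ ω) :
    Ehist n k μ φ ≤ Ehist n k μ ψ := by
  refine Finset.sum_le_sum fun g _ => ?_
  exact mul_le_mul_of_nonneg_left (h _) (Finset.prod_nonneg fun _ _ => hμ0 _)

lemma Ehist_const (hμ1 : ∑ S : Finset (Fin n), μ S = 1) (c : ℝ) :
    Ehist n k μ (fun _ => c) = c := by
  induction k with
  | zero => simp [Ehist]
  | succ k ih =>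
    rw [show (Ehist n (k+1) μ (fun _ => c))
      = Ehist n k μ (fun ω => ∑ S : Finset (Fin n), μ S * (fun _ : ℕ → Finset (Fin n) => c)
          (Function.update ω k S)) from Ehist_succ (φ := fun _ => c)]
    simpa [← Finset.sum_mul, hμ1] using ih

lemma Ehist_nonneg (hμ0 : ∀ S, 0 ≤ μ S) (h : ∀ ω, 0 ≤ φ ω) : 0 ≤ Ehist n k μ φ :=
  Finset.sum_nonneg fun g _ => mul_nonneg (Finset.prod_nonneg fun _ _ => hμ0 _) (h _)

lemma Ehist_finsum {ι : Type*} (s : Finset ι) (Φ : ι → (ℕ → Finset (Fin n)) → ℝ) :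
    Ehist n k μ (fun ω => ∑ l ∈ s, Φ l ω) = ∑ l ∈ s, Ehist n k μ (Φ l) := by
  simp only [Ehist, Finset.mul_sum]
  rw [Finset.sum_comm]

lemma Ehist_shrink (hμ1 : ∑ S : Finset (Fin n), μ S = 1) {l : ℕ} (hlk : l ≤ k)
    (hφ : ∀ ω ω' : ℕ → Finset (Fin n), (∀ j < l, ω j = ω' j) → φ ω = φ ω') :
    Ehist n k μ φ = Ehist n l μ φ := by
  induction k with
  | zero => obtain rfl := Nat.le_zero.mp hlk; rfl
  | succ k ih =>
    rcases Nat.eq_or_lt_of_le hlk with h1 | h1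
    · rw [h1]
    · have hlk' : l ≤ k := by omega
      have hcg : ∀ ω : ℕ → Finset (Fin n),
          (∑ S : Finset (Fin n), μ S * φ (Function.update ω k S)) = φ ω := by
        intro ω
        have h3 : ∀ S, φ (Function.update ω k S) = φ ω := fun S =>
          hφ _ _ (fun j hj => Function.update_of_ne (show j ≠ k by omega) S ω)
        simp only [h3, ← Finset.sum_mul, hμ1, one_mul]
      rw [Ehist_succ, Ehist_congr hcg, ih hlk']

lemma alpha_split_ite (n : ℕ) (μ : Finset (Fin n) → ℝ)
    (hμ1 : ∑ S : Finset (Fin n), μ S = 1) (i : Fin n) (c1 c2 : ℝ) :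
    ∑ S : Finset (Fin n), μ S * (if i ∈ S then c1 else c2)
      = (∑ S : Finset (Fin n), if i ∈ S then μ S else 0) * c1
        + (1 - ∑ S : Finset (Fin n), if i ∈ S then μ S else 0) * c2 := by
  have e1 : ∀ S : Finset (Fin n), μ S * (if i ∈ S then c1 else c2)
      = (if i ∈ S then μ S else 0) * c1 + (μ S - (if i ∈ S then μ S else 0)) * c2 := by
    intro S; split <;> ring
  simp only [e1, Finset.sum_add_distrib, ← Finset.sum_mul, Finset.sum_sub_distrib, hμ1]

lemma alpha_onestep (n : ℕ) (μ : Finset (Fin n) → ℝ)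
    (hμ1 : ∑ S : Finset (Fin n), μ S = 1)
    (p : Fin n → ℝ)
    (hpdef : ∀ i, p i = ∑ S : Finset (Fin n), if i ∈ S then μ S else 0)
    (hp0 : ∀ i, 0 < p i)
    (v : Fin n → ℝ) (hv : ∀ i, 0 < v i)
    (f : (Fin n → ℝ) → ℝ) (g : (Fin n → ℝ) → (Fin n → ℝ))
    (hconv : ∀ x y : Fin n → ℝ, f x + ∑ i, g x i * (y i - x i) ≤ f y)
    (heso : ∀ x h : Fin n → ℝ,
      (∑ S : Finset (Fin n), μ S * f (x + fun i => if i ∈ S then h i else 0))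
        ≤ f x + (∑ i, p i * g x i * h i) + (1/2) * ∑ i, v i * p i * (h i)^2)
    (θ0 : ℝ) (hθ0 : 0 < θ0) (hθ1 : θ0 ≤ 1)
    (y x z yk : Fin n → ℝ) (hyk : ∀ i, yk i = (1-θ0)*x i + θ0*z i) :
    ∑ S : Finset (Fin n), μ S *
      (f (fun i => yk i + if i ∈ S then -(1/v i) * g yk i else 0)
        + θ0^2/2 * ∑ i, (v i/(p i)^2) *
            ((if i ∈ S then z i - (p i/(v i*θ0)) * g yk i else z i) - y i)^2)
    ≤ (1-θ0) * f x + θ0 * f y + θ0^2/2 * ∑ i, (v i/(p i)^2) * (z i - y i)^2 := by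
  set A := ∑ i, (p i / v i) * (g yk i)^2 with hA
  set T := ∑ i, g yk i * (z i - y i) with hT
  set Qz := ∑ i, (v i/(p i)^2) * (z i - y i)^2 with hQz
  have hf : ∑ S : Finset (Fin n), μ S * f (fun i => yk i + if i ∈ S then -(1/v i) * g yk i else 0)
      ≤ f yk - A/2 := by
    have h1 := heso yk (fun i => -(1/v i) * g yk i)
    have h2 : ∀ S : Finset (Fin n),
        (yk + fun i => if i ∈ S then (fun i => -(1/v i) * g yk i) i else 0)
        = (fun i => yk i + if i ∈ S then -(1/v i) * g yk i else 0) := fun S => rfl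
    simp only [h2] at h1
    have h3 : ∑ i, p i * g yk i * ((fun i => -(1/v i) * g yk i) i) = -A := by
      rw [hA, ← Finset.sum_neg_distrib]
      refine Finset.sum_congr rfl fun i _ => ?_
      field_simp
    have h4 : (1/2) * ∑ i, v i * p i * (((fun i => -(1/v i) * g yk i) i))^2 = A/2 := by
      rw [hA, Finset.mul_sum, Finset.sum_div]
      refine Finset.sum_congr rfl fun i _ => ?_
      have := (hv i).ne'
      field_simp
    rw [h3, h4] at h1
    linarith
  have hq : ∑ S : Finset (Fin n), μ S * (∑ i, (v i/(p i)^2) *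
        ((if i ∈ S then z i - (p i/(v i*θ0)) * g yk i else z i) - y i)^2)
      = Qz - (2/θ0) * T + (1/θ0^2) * A := by
    have swap : ∑ S : Finset (Fin n), μ S * (∑ i, (v i/(p i)^2) *
          ((if i ∈ S then z i - (p i/(v i*θ0)) * g yk i else z i) - y i)^2)
        = ∑ i, ∑ S : Finset (Fin n), μ S * ((v i/(p i)^2) *
            ((if i ∈ S then z i - (p i/(v i*θ0)) * g yk i else z i) - y i)^2) := by
      simp only [Finset.mul_sum]
      exact Finset.sum_comm
    rw [swap]
    have hi : ∀ i : Fin n, ∑ S : Finset (Fin n), μ S * ((v i/(p i)^2) *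
          ((if i ∈ S then z i - (p i/(v i*θ0)) * g yk i else z i) - y i)^2)
        = (v i/(p i)^2)*(z i - y i)^2 - (2/θ0) * (g yk i * (z i - y i))
          + (1/θ0^2) * ((p i / v i) * (g yk i)^2) := by
      intro i
      have e : ∀ S : Finset (Fin n), μ S * ((v i/(p i)^2) *
            ((if i ∈ S then z i - (p i/(v i*θ0)) * g yk i else z i) - y i)^2)
          = μ S * (if i ∈ S then (v i/(p i)^2) * ((z i - (p i/(v i*θ0)) * g yk i) - y i)^2
              else (v i/(p i)^2) * (z i - y i)^2) := by
        intro S; split <;> ring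
      rw [Finset.sum_congr rfl (fun S _ => e S), alpha_split_ite n μ hμ1 i, ← hpdef i]
      have hpi := (hp0 i).ne'
      have hvi := (hv i).ne'
      have hθ := hθ0.ne'
      field_simp
      ring
    rw [Finset.sum_congr rfl (fun i _ => hi i), Finset.sum_add_distrib, Finset.sum_sub_distrib,
      ← Finset.mul_sum, ← Finset.mul_sum, hQz, hT, hA]
  have hcv : f yk ≤ (1-θ0) * f x + θ0 * f y + θ0 * T := by
    have h1 := hconv yk x
    have h2 := hconv yk y
    have hsum : (1-θ0) * (∑ i, g yk i * (x i - yk i)) + θ0 * (∑ i, g yk i * (y i - yk i))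
        = -(θ0 * T) := by
      rw [hT, Finset.mul_sum, Finset.mul_sum, Finset.mul_sum, ← Finset.sum_add_distrib,
        ← Finset.sum_neg_distrib]
      refine Finset.sum_congr rfl fun i _ => ?_
      rw [hyk i]; ring
    nlinarith [mul_le_mul_of_nonneg_left h1 (by linarith : (0:ℝ) ≤ 1-θ0),
      mul_le_mul_of_nonneg_left h2 hθ0.le]
  have expand : ∑ S : Finset (Fin n), μ S *
      (f (fun i => yk i + if i ∈ S then -(1/v i) * g yk i else 0)
        + θ0^2/2 * ∑ i, (v i/(p i)^2) *
            ((if i ∈ S then z i - (p i/(v i*θ0)) * g yk i else z i) - y i)^2)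
      = (∑ S : Finset (Fin n), μ S * f (fun i => yk i + if i ∈ S then -(1/v i) * g yk i else 0))
        + θ0^2/2 * ∑ S : Finset (Fin n), μ S * (∑ i, (v i/(p i)^2) *
            ((if i ∈ S then z i - (p i/(v i*θ0)) * g yk i else z i) - y i)^2) := by
    rw [Finset.mul_sum, ← Finset.sum_add_distrib]
    exact Finset.sum_congr rfl fun S _ => by ring
  rw [expand, hq]
  have hexp : θ0^2/2 * (Qz - (2/θ0) * T + (1/θ0^2) * A) = θ0^2/2 * Qz - θ0 * T + A/2 := by
    field_simp
  rw [hexp]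
  linarith

end AlphaAux

/-- Theorem 3.1 (ALPHA, smooth & nonaccelerated): with constant stepsize θ₀ ∈ (0,1],
`max{E[f(x̂_k)], min_{1≤l≤k} E[f(x_l)]} − f(y) ≤ C/((k−1)θ₀+1)`. -/
theorem alpha_smooth_nonaccelerated (n : ℕ) (μ : Finset (Fin n) → ℝ)
    (hμ0 : ∀ S, 0 ≤ μ S) (hμ1 : ∑ S : Finset (Fin n), μ S = 1)
    (p : Fin n → ℝ)
    (hpdef : ∀ i, p i = ∑ S : Finset (Fin n), if i ∈ S then μ S else 0)
    (hp0 : ∀ i, 0 < p i)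
    (v : Fin n → ℝ) (hv : ∀ i, 0 < v i)
    (f : (Fin n → ℝ) → ℝ) (g : (Fin n → ℝ) → (Fin n → ℝ))
    (hconv : ∀ x y : Fin n → ℝ, f x + ∑ i, g x i * (y i - x i) ≤ f y)
    (heso : ∀ x h : Fin n → ℝ,
      (∑ S : Finset (Fin n), μ S * f (x + fun i => if i ∈ S then h i else 0))
        ≤ f x + (∑ i, p i * g x i * h i) + (1/2) * ∑ i, v i * p i * (h i)^2)
    (θ0 : ℝ) (hθ0 : 0 < θ0) (hθ1 : θ0 ≤ 1)
    (x0 : Fin n → ℝ)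
    (X Z : ℕ → (ℕ → Finset (Fin n)) → (Fin n → ℝ))
    (hadapt : ∀ k (ω ω' : ℕ → Finset (Fin n)), (∀ j < k, ω j = ω' j) →
      X k ω = X k ω' ∧ Z k ω = Z k ω')
    (hX0 : ∀ ω, X 0 ω = x0) (hZ0 : ∀ ω, Z 0 ω = x0)
    (hZ : ∀ k ω i, Z (k+1) ω i =
      if i ∈ ω k then
        Z k ω i - (p i/(v i * θ0)) * g (fun j => (1-θ0)*X k ω j + θ0*Z k ω j) i
      else Z k ω i)
    (hX : ∀ k ω i, X (k+1) ω i =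
      ((1-θ0)*X k ω i + θ0*Z k ω i) + (θ0/p i)*(Z (k+1) ω i - Z k ω i))
    (y : Fin n → ℝ) :
    ∀ k : ℕ, ∀ hk : 1 ≤ k,
      max
        (Ehist n k μ (fun ω => f (fun i =>
          (X k ω i + θ0 * ∑ l ∈ Finset.Ico 1 k, X l ω i) / (1 + ((k:ℝ)-1)*θ0))))
        ((Finset.Icc 1 k).inf' (Finset.nonempty_Icc.mpr hk)
          (fun l => Ehist n l μ (fun ω => f (X l ω))))
      - f y
      ≤ ((1-θ0)*(f x0 - f y) + θ0^2/2 * ∑ i, (v i/(p i)^2)*(x0 i - y i)^2)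
          / (((k:ℝ)-1)*θ0 + 1) := by
  intro k hk
  set E : ℕ → ℝ := fun l => Ehist n l μ (fun ω => f (X l ω)) with hE
  set EQ : ℕ → ℝ := fun l =>
    Ehist n l μ (fun ω => ∑ i, v i/(p i)^2 * (Z l ω i - y i)^2) with hEQ
  set Φ : ℕ → ℝ := fun l =>
    Ehist n l μ (fun ω => f (X l ω) + θ0^2/2 * ∑ i, v i/(p i)^2 * (Z l ω i - y i)^2) with hΦ
  have hΦdec : ∀ m, Φ m = E m + θ0^2/2 * EQ m := by
    intro m
    simp only [hΦ, hE, hEQ]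
    rw [Ehist_add, Ehist_smul]
  have hEQ0 : ∀ m, 0 ≤ EQ m := by
    intro m
    refine Ehist_nonneg hμ0 fun ω => Finset.sum_nonneg fun i _ => ?_
    exact mul_nonneg (div_nonneg (hv i).le (sq_nonneg _)) (sq_nonneg _)
  -- the key one-step recursion
  have hrec : ∀ m : ℕ, Φ (m+1) + θ0 * E m ≤ Φ m + θ0 * f y := by
    intro m
    have key : ∀ ω : ℕ → Finset (Fin n),
        (∑ S : Finset (Fin n), μ S *
          ((fun ω' => f (X (m+1) ω') + θ0^2/2 * ∑ i, v i/(p i)^2 * (Z (m+1) ω' i - y i)^2)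
            (Function.update ω m S)))
        ≤ (1-θ0) * f (X m ω) + θ0 * f y
            + θ0^2/2 * ∑ i, v i/(p i)^2 * (Z m ω i - y i)^2 := by
      intro ω
      set yk : Fin n → ℝ := fun i => (1-θ0)*X m ω i + θ0*Z m ω i with hykdef
      have main := alpha_onestep n μ hμ1 p hpdef hp0 v hv f g hconv heso θ0 hθ0 hθ1
        y (X m ω) (Z m ω) yk (fun i => rfl)
      refine le_trans (le_of_eq (Finset.sum_congr rfl fun S _ => ?_)) main
      have hagree : ∀ j < m, (Function.update ω m S) j = ω j := fun j hj =>
        Function.update_of_ne (show j ≠ m by omega) S ω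
      obtain ⟨hXe, hZe⟩ := hadapt m (Function.update ω m S) ω hagree
      have hSm : (Function.update ω m S) m = S := Function.update_self _ _ _
      have hZ1 : ∀ i, Z (m+1) (Function.update ω m S) i
          = (if i ∈ S then Z m ω i - (p i/(v i*θ0)) * g yk i else Z m ω i) := by
        intro i
        rw [hZ m (Function.update ω m S) i, hSm, hXe, hZe]
      have hX1 : X (m+1) (Function.update ω m S)
          = fun i => yk i + (if i ∈ S then -(1/v i) * g yk i else 0) := by
        funext i
        rw [hX m (Function.update ω m S) i, hXe, hZe, hZ1 i]
        by_cases hiS : i ∈ S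
        · simp only [if_pos hiS]
          have hpi := (hp0 i).ne'
          have hvi := (hv i).ne'
          have hθ := hθ0.ne'
          rw [hykdef]
          field_simp
          ring
        · simp only [if_neg hiS]
          rw [hykdef]
          ring
      simp only [hX1]
      have hQe : ∑ i, v i/(p i)^2 * (Z (m+1) (Function.update ω m S) i - y i)^2
          = ∑ i, (v i/(p i)^2) *
              ((if i ∈ S then Z m ω i - (p i/(v i*θ0)) * g yk i else Z m ω i) - y i)^2 :=
        Finset.sum_congr rfl fun i _ => by rw [hZ1 i]
      rw [hQe]
    have step1 : Φ (m+1) ≤ (1-θ0) * E m + θ0 * f y + θ0^2/2 * EQ m := by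
      simp only [hΦ, hE, hEQ]
      rw [Ehist_succ]
      calc Ehist n m μ (fun ω => ∑ S : Finset (Fin n), μ S *
            ((fun ω' => f (X (m+1) ω')
              + θ0^2/2 * ∑ i, v i/(p i)^2 * (Z (m+1) ω' i - y i)^2) (Function.update ω m S)))
          ≤ Ehist n m μ (fun ω => (1-θ0) * f (X m ω) + θ0 * f y
              + θ0^2/2 * ∑ i, v i/(p i)^2 * (Z m ω i - y i)^2) := Ehist_le hμ0 key
        _ = (1-θ0) * E m + θ0 * f y + θ0^2/2 * EQ m := by
            rw [Ehist_add, Ehist_add, Ehist_smul, Ehist_smul, Ehist_const hμ1,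
              Ehist_smul]
    rw [hΦdec m]
    linarith
  have hΦ0 : Φ 0 = f x0 + θ0^2/2 * ∑ i, v i/(p i)^2 * (x0 i - y i)^2 := by
    rw [hΦ]
    simp [Ehist, hX0, hZ0]
  have hsum : ∀ m : ℕ, Φ m + θ0 * ∑ l ∈ Finset.range m, E l ≤ Φ 0 + θ0 * m * f y := by
    intro m
    induction m with
    | zero => simp
    | succ m ih =>
      rw [Finset.sum_range_succ, mul_add]
      have h1 := hrec m
      have h2 : θ0 * ((m+1 : ℕ) : ℝ) * f y = θ0 * (m:ℝ) * f y + θ0 * f y := by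
        push_cast; ring
      rw [h2]
      linarith
  have hE0 : E 0 = f x0 := by
    rw [hE]; simp [Ehist, hX0]
  have hkey : E k + θ0 * ∑ l ∈ Finset.Ico 1 k, E l
      ≤ (1-θ0) * f x0 + θ0^2/2 * (∑ i, v i/(p i)^2 * (x0 i - y i)^2) + θ0 * k * f y := by
    have h1 := hsum k
    have h2 : ∑ l ∈ Finset.range k, E l = E 0 + ∑ l ∈ Finset.Ico 1 k, E l := by
      rw [Finset.range_eq_Ico, ← Finset.sum_eq_sum_Ico_succ_bot (by omega : 0 < k)]
    rw [h2, hE0, hΦ0, hΦdec k, mul_add] at h1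
    have h3 : 0 ≤ θ0^2/2 * EQ k := mul_nonneg (by positivity) (hEQ0 k)
    have h4 : (1-θ0) * f x0 = f x0 - θ0 * f x0 := by ring
    linarith
  set C : ℝ := (1-θ0)*(f x0 - f y) + θ0^2/2 * ∑ i, (v i/(p i)^2)*(x0 i - y i)^2 with hC
  set D : ℝ := 1 + ((k:ℝ)-1)*θ0 with hD
  have hk1 : (1:ℝ) ≤ (k:ℝ) := by exact_mod_cast hk
  have hDpos : 0 < D := by rw [hD]; nlinarith
  have hCD : (1-θ0) * f x0 + θ0^2/2 * (∑ i, v i/(p i)^2 * (x0 i - y i)^2) + θ0 * k * f y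
      = C + D * f y := by
    rw [hC, hD]; ring
  have hcard : ((Finset.Ico 1 k).card : ℝ) = (k:ℝ) - 1 := by
    rw [Nat.card_Ico]
    push_cast [Nat.cast_sub hk]
    ring
  have hred : ∀ t : ℝ, D * t ≤ C + D * f y → t ≤ C / D + f y := by
    intro t ht
    have h2 : t - f y ≤ C / D := by
      rw [le_div_iff₀ hDpos]; nlinarith
    linarith
  have hdenom : (((k:ℝ)-1)*θ0 + 1) = D := by rw [hD]; ring
  rw [hdenom, sub_le_iff_le_add]
  have hEbound : E k + θ0 * ∑ l ∈ Finset.Ico 1 k, E l ≤ C + D * f y := by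
    rw [← hCD]; exact hkey
  apply max_le
  · -- Jensen part
    have hjen : ∀ ω : ℕ → Finset (Fin n),
        f (fun i => (X k ω i + θ0 * ∑ l ∈ Finset.Ico 1 k, X l ω i) / D)
        ≤ (f (X k ω) + θ0 * ∑ l ∈ Finset.Ico 1 k, f (X l ω)) / D := by
      intro ω
      set u : Fin n → ℝ :=
        fun i => (X k ω i + θ0 * ∑ l ∈ Finset.Ico 1 k, X l ω i) / D with hu
      have h1 := hconv u (X k ω)
      have h3 : θ0 * ∑ l ∈ Finset.Ico 1 k, (f u + ∑ i, g u i * (X l ω i - u i))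
          ≤ θ0 * ∑ l ∈ Finset.Ico 1 k, f (X l ω) :=
        mul_le_mul_of_nonneg_left (Finset.sum_le_sum fun l _ => hconv u (X l ω)) hθ0.le
      have hzero : (∑ i, g u i * (X k ω i - u i))
          + θ0 * ∑ l ∈ Finset.Ico 1 k, (∑ i, g u i * (X l ω i - u i)) = 0 := by
        have hswap : ∑ l ∈ Finset.Ico 1 k, (∑ i, g u i * (X l ω i - u i))
            = ∑ i, ∑ l ∈ Finset.Ico 1 k, g u i * (X l ω i - u i) := Finset.sum_comm
        rw [hswap, Finset.mul_sum, ← Finset.sum_add_distrib]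
        refine Finset.sum_eq_zero fun i _ => ?_
        have hsl : ∑ l ∈ Finset.Ico 1 k, g u i * (X l ω i - u i)
            = g u i * ((∑ l ∈ Finset.Ico 1 k, X l ω i) - ((k:ℝ)-1) * u i) := by
          have e : ∀ l, g u i * (X l ω i - u i) = g u i * X l ω i - g u i * u i :=
            fun l => by ring
          rw [Finset.sum_congr rfl (fun l _ => e l), Finset.sum_sub_distrib,
            Finset.sum_const, ← Finset.mul_sum, nsmul_eq_mul, hcard]
          ring
        rw [hsl]
        have hui : D * u i = X k ω i + θ0 * ∑ l ∈ Finset.Ico 1 k, X l ω i := by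
          rw [hu]
          field_simp
        linear_combination (-(g u i)) * hui
      have hcards : ∑ l ∈ Finset.Ico 1 k, (f u + ∑ i, g u i * (X l ω i - u i))
          = ((k:ℝ)-1) * f u + ∑ l ∈ Finset.Ico 1 k, (∑ i, g u i * (X l ω i - u i)) := by
        rw [Finset.sum_add_distrib, Finset.sum_const, nsmul_eq_mul, hcard]
      rw [hcards, mul_add] at h3
      rw [le_div_iff₀ hDpos]
      have hfd : f u * D = f u + θ0 * (((k:ℝ)-1) * f u) := by rw [hD]; ring
      linarith
    have hlin : Ehist n k μ (fun ω =>
          (f (X k ω) + θ0 * ∑ l ∈ Finset.Ico 1 k, f (X l ω)) / D)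
        = (E k + θ0 * ∑ l ∈ Finset.Ico 1 k, E l) / D := by
      have e1 : (fun ω : ℕ → Finset (Fin n) =>
            (f (X k ω) + θ0 * ∑ l ∈ Finset.Ico 1 k, f (X l ω)) / D)
          = fun ω => (1/D) * (f (X k ω) + (θ0 * ∑ l ∈ Finset.Ico 1 k, f (X l ω))) := by
        funext ω; ring
      rw [e1, Ehist_smul, Ehist_add]
      have e3 : (fun ω : ℕ → Finset (Fin n) => θ0 * ∑ l ∈ Finset.Ico 1 k, f (X l ω))
          = fun ω => θ0 * ((fun ω' => ∑ l ∈ Finset.Ico 1 k, f (X l ω')) ω) := rfl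
      rw [e3, Ehist_smul, Ehist_finsum]
      have e2 : ∀ l ∈ Finset.Ico 1 k, Ehist n k μ (fun ω => f (X l ω)) = E l := by
        intro l hl
        rw [hE]
        exact Ehist_shrink hμ1 (Finset.mem_Ico.mp hl).2.le
          (fun ω ω' hag => by rw [(hadapt l ω ω' hag).1])
      rw [Finset.sum_congr rfl e2, hE]
      ring
    have hle := Ehist_le (k := k) hμ0 hjen
    rw [hlin] at hle
    refine hred _ ?_
    have h5 := mul_le_mul_of_nonneg_left hle hDpos.le
    rw [mul_div_cancel₀ _ hDpos.ne'] at h5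
    exact h5.trans hEbound
  · -- min part
    set I := (Finset.Icc 1 k).inf' (Finset.nonempty_Icc.mpr hk) E with hI
    have hIk : I ≤ E k :=
      Finset.inf'_le E (Finset.mem_Icc.mpr ⟨hk, le_refl k⟩)
    have hIl : ∀ l ∈ Finset.Ico 1 k, I ≤ E l := fun l hl =>
      Finset.inf'_le E (Finset.mem_Icc.mpr ⟨(Finset.mem_Ico.mp hl).1,
        (Finset.mem_Ico.mp hl).2.le⟩)
    have hsumI : ((k:ℝ)-1) * I ≤ ∑ l ∈ Finset.Ico 1 k, E l := by
      calc ((k:ℝ)-1) * I = ((Finset.Ico 1 k).card : ℝ) * I := by rw [hcard]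
        _ = ∑ _l ∈ Finset.Ico 1 k, I := by rw [Finset.sum_const, nsmul_eq_mul]
        _ ≤ ∑ l ∈ Finset.Ico 1 k, E l := Finset.sum_le_sum hIl
    refine hred _ ?_
    have h5 : θ0 * (((k:ℝ)-1) * I) ≤ θ0 * ∑ l ∈ Finset.Ico 1 k, E l :=
      mul_le_mul_of_nonneg_left hsumI hθ0.le
    have h6 : D * I = I + θ0 * (((k:ℝ)-1) * I) := by rw [hD]; ring
    linarith
end

section
/- Fix i and let p_i ∈ (0,1], and let {θ_k}_{k≥0} ⊆ (0,1] be a decreasing positive sequence with θ₀ ≤ p_i. Define coefficients γ_{0,0} = 1, γ_{1,0} = 1 − θ₀/p_i, γ_{1,1} = θ₀/p_i, and for k ≥ 1: γ_{k+1,l} = (1−θ_k)γ_{k,l} for l ≤ k−1, γ_{k+1,k} = (1−θ_k)γ_{k,k} + θ_k − θ_k/p_i, γ_{k+1,k+1} = θ_k/p_i. Then for every k ≥ 0, the coefficients γ_{k,0},...,γ_{k,k} are all nonnegative and sum to 1. -/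
/-- Lemma 5.1 (convex combination): the coefficients `γ_{k,l}` are nonnegative and
sum to one, for each block `i` (here for a fixed block with probability `p`). -/
theorem gamma_convex_combination (p : ℝ) (hp0 : 0 < p) (hp1 : p ≤ 1)
    (θ : ℕ → ℝ) (hθpos : ∀ k, 0 < θ k) (hθ1 : ∀ k, θ k ≤ 1)
    (hdec : ∀ k, θ (k+1) ≤ θ k) (hθ0p : θ 0 ≤ p)
    (γ : ℕ → ℕ → ℝ)
    (h00 : γ 0 0 = 1) (h10 : γ 1 0 = 1 - θ 0/p) (h11 : γ 1 1 = θ 0/p)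
    (hrec : ∀ k, 1 ≤ k →
      (∀ l ≤ k-1, γ (k+1) l = (1-θ k)*γ k l)
      ∧ γ (k+1) k = (1-θ k)*γ k k + θ k - θ k/p
      ∧ γ (k+1) (k+1) = θ k/p) :
    ∀ k : ℕ, (∀ l ≤ k, 0 ≤ γ k l) ∧ ∑ l ∈ Finset.range (k+1), γ k l = 1 := by
  have hmono : ∀ k, θ k ≤ θ 0 := by
    intro k
    induction k with
    | zero => exact le_refl _
    | succ n ih => exact le_trans (hdec n) ih
  have hdiag : ∀ k, 1 ≤ k → γ k k = θ (k-1) / p := by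
    intro k hk
    rcases Nat.exists_eq_add_of_le hk with ⟨m, rfl⟩
    cases m with
    | zero => simpa using h11
    | succ n =>
      have h := (hrec (n+1) (Nat.le_add_left 1 n)).2.2
      simpa [add_comm] using h
  intro k
  induction k with
  | zero =>
    refine ⟨?_, by simpa using h00⟩
    intro l hl
    interval_cases l
    simp [h00]
  | succ k ih =>
    cases k with
    | zero =>
      refine ⟨?_, ?_⟩
      · intro l hl
        interval_cases l
        · rw [h10]
          have := div_le_one_of_le₀ hθ0p hp0.le
          linarith
        · rw [h11]; exact div_nonneg (hθpos 0).le hp0.le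
      · rw [Finset.sum_range_succ, Finset.sum_range_one, h10, h11]; ring
    | succ k =>
      obtain ⟨ihnn, ihsum⟩ := ih
      have hk1 : 1 ≤ k + 1 := Nat.le_add_left 1 k
      obtain ⟨hA, hB, hC⟩ := hrec (k+1) hk1
      have hd : γ (k+1) (k+1) = θ k / p := by simpa using hdiag (k+1) hk1
      have hθk1 : θ (k+1) ≤ θ k := hdec k
      have hθkp : θ k ≤ p := le_trans (hmono k) hθ0p
      have hBnn : 0 ≤ γ (k+2) (k+1) := by
        rw [hB, hd]
        have h1 : 0 ≤ (θ k - θ (k+1)) / p := by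
          apply div_nonneg; linarith; exact hp0.le
        have h2 : 0 ≤ θ (k+1) * (p - θ k) / p := by
          apply div_nonneg
          · exact mul_nonneg (hθpos (k+1)).le (by linarith)
          · exact hp0.le
        have : (1 - θ (k+1)) * (θ k / p) + θ (k+1) - θ (k+1) / p
            = (θ k - θ (k+1)) / p + θ (k+1) * (p - θ k) / p := by
          field_simp; ring
        linarith [this ▸ (add_nonneg h1 h2)]
      have hCnn : 0 ≤ γ (k+2) (k+2) := by
        rw [hC]; exact div_nonneg (hθpos (k+1)).le hp0.le
      refine ⟨?_, ?_⟩
      · intro l hl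
        rcases lt_or_ge l (k+1) with h | h
        · have hl' : l ≤ k + 1 - 1 := Nat.le_sub_one_of_lt h
          rw [hA l hl']
          have := ihnn l (le_of_lt h)
          have : 0 ≤ (1 - θ (k+1)) * γ (k+1) l :=
            mul_nonneg (by linarith [hθ1 (k+1)]) this
          linarith
        · have : l = k+1 ∨ l = k+2 := by omega
          rcases this with rfl | rfl
          · exact hBnn
          · exact hCnn
      · have hsum0 : ∑ l ∈ Finset.range (k+1), γ (k+2) l
            = (1 - θ (k+1)) * ∑ l ∈ Finset.range (k+1), γ (k+1) l := by
          rw [Finset.mul_sum]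
          apply Finset.sum_congr rfl
          intro l hl
          exact hA l (Nat.le_sub_one_of_lt (Finset.mem_range.mp hl))
        have hs : ∑ l ∈ Finset.range (k+1), γ (k+1) l = 1 - γ (k+1) (k+1) := by
          have := ihsum
          rw [Finset.sum_range_succ] at this
          linarith
        rw [show k + 1 + 1 + 1 = (k+1) + 1 + 1 from rfl,
          Finset.sum_range_succ, Finset.sum_range_succ, hsum0, hs, hB, hC]
        field_simp
        ring
end

section
/- In the proximal ALPHA setting, define ψ̂_k^i = Σ_{l=0}^k γ_{k,l}^i ψ^i(z_l^i). Then for all k ≥ 0 and all i: E_k[ψ̂_{k+1}^i] = (1−θ_k)ψ̂_k^i + θ_k ψ^i(z̃_{k+1}^i), where z̃_{k+1} is the full proximal update and z_{k+1}^i = z̃_{k+1}^i if i ∈ S_k and z_{k+1}^i = z_k^i otherwise, and E_k is expectation over S_k (with P(i ∈ S_k) = p_i). -/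
/-- Lemma 5.2: `E_k[ψ̂_{k+1}^i] = (1−θ_k)ψ̂_k^i + θ_k ψ^i(z̃_{k+1}^i)`, where the
(k+1)-st block equals `z̃_{k+1}` with probability `p` and `z_k` otherwise. -/
theorem psihat_expectation {E : Type*} (p : ℝ) (hp0 : 0 < p) (hp1 : p ≤ 1)
    (θ : ℕ → ℝ) (hθ : ∀ k, 0 < θ k ∧ θ k ≤ 1)
    (γ : ℕ → ℕ → ℝ)
    (h00 : γ 0 0 = 1) (h10 : γ 1 0 = 1 - θ 0/p) (h11 : γ 1 1 = θ 0/p)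
    (hrec : ∀ k, 1 ≤ k →
      (∀ l ≤ k-1, γ (k+1) l = (1-θ k)*γ k l)
      ∧ γ (k+1) k = (1-θ k)*γ k k + θ k - θ k/p
      ∧ γ (k+1) (k+1) = θ k/p)
    (ψ : E → ℝ) (z : ℕ → E) (ztil : ℕ → E) :
    ∀ k : ℕ,
      (∑ l ∈ Finset.range (k+1), γ (k+1) l * ψ (z l))
        + γ (k+1) (k+1) * ((1-p) * ψ (z k) + p * ψ (ztil k))
      = (1-θ k) * (∑ l ∈ Finset.range (k+1), γ k l * ψ (z l)) + θ k * ψ (ztil k) := by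
  intro k
  cases k with
  | zero =>
    have hne : p ≠ 0 := hp0.ne'
    rw [show (0:ℕ)+1 = 1 from rfl, Finset.sum_range_one, Finset.sum_range_one, h00, h10, h11]
    field_simp
    ring
  | succ n =>
    obtain ⟨hl, hk1, hk2⟩ := hrec (n+1) (Nat.le_add_left 1 n)
    have hne : p ≠ 0 := hp0.ne'
    rw [Finset.sum_range_succ, Finset.sum_range_succ (f := fun l => γ (n+1) l * ψ (z l))]
    have hs : ∑ l ∈ Finset.range (n+1), γ (n+1+1) l * ψ (z l)
        = (1 - θ (n+1)) * ∑ l ∈ Finset.range (n+1), γ (n+1) l * ψ (z l) := by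
      rw [Finset.mul_sum]
      refine Finset.sum_congr rfl fun l hl' => ?_
      rw [hl l (by simpa using Nat.lt_succ_iff.mp (Finset.mem_range.mp hl'))]
      ring
    rw [hs, hk1, hk2]
    field_simp
    ring
end

section
/- Let f, S, v, p be as in the smooth ALPHA setting with constant θ_k = θ₀ = min_i p_i, and suppose S is a serial uniform sampling on {1,...,n} (so p_i = 1/n for all i, and the three sequences x_k = y_k = z_k coincide). Then for any minimizer x* of f and all k ≥ 1: E[f(x_k)] − f(x*) ≤ (n/(k−1+n))·[(1 − 1/n)(f(x₀) − f(x*)) + (1/2)‖x₀ − x*‖_v²]. -/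
open Finset

lemma sum_snoc_aux {n k : ℕ} (φ : (Fin (k+1) → Fin n) → ℝ) :
    ∑ h' : Fin (k+1) → Fin n, φ h' = ∑ h : Fin k → Fin n, ∑ i : Fin n, φ (Fin.snoc h i) := by
  rw [← Equiv.sum_comp (Fin.snocEquiv fun _ => Fin n) φ, Fintype.sum_prod_type]
  rw [Finset.sum_comm]
  rfl

lemma weight_sum_one {n : ℕ} (hn : 0 < n) (k : ℕ) :
    ∑ _h : Fin k → Fin n, ((1:ℝ)/n)^k = 1 := by
  have hN : ((n:ℝ)) ≠ 0 := Nat.cast_ne_zero.mpr hn.ne'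
  rw [Finset.sum_const, Finset.card_univ, Fintype.card_fun, Fintype.card_fin, Fintype.card_fin,
    nsmul_eq_mul]
  push_cast
  rw [div_pow, one_pow, mul_one_div, div_self (pow_ne_zero _ hN)]

lemma pow_step {N : ℝ} (hN : N ≠ 0) (m : ℕ) (c : ℝ) :
    N * ((1/N)^(m+1) * c) = (1/N)^m * c := by
  rw [pow_succ]; field_simp

lemma pow_step2 {N : ℝ} (hN : N ≠ 0) (m : ℕ) (a b : ℝ) :
    (1/N)^(m+1) * (N*a - b) = (1/N)^m * a - 1/N * ((1/N)^m * b) := by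
  rw [pow_succ]; field_simp

/-- Complexity of serial-uniform-sampling coordinate descent:
`E[f(x_k)] − f(x*) ≤ (n/(k−1+n))·[(1 − 1/n)(f(x₀) − f(x*)) + (1/2)‖x₀ − x*‖_v²]`. -/
theorem serial_uniform_cd_rate (n : ℕ) (hn : 0 < n)
    (f : (Fin n → ℝ) → ℝ) (g : (Fin n → ℝ) → (Fin n → ℝ))
    (v : Fin n → ℝ) (hv : ∀ i, 0 < v i)
    (hconv : ∀ x y : Fin n → ℝ, f x + ∑ i, g x i * (y i - x i) ≤ f y)
    (hL : ∀ (x : Fin n → ℝ) (i : Fin n) (t : ℝ),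
      f (x + Pi.single i t) ≤ f x + g x i * t + (v i/2)*t^2)
    (x0 : Fin n → ℝ)
    (X : (k : ℕ) → (Fin k → Fin n) → (Fin n → ℝ))
    (hX0 : ∀ h, X 0 h = x0)
    (hupd : ∀ (k : ℕ) (h : Fin k → Fin n) (i j : Fin n),
      X (k+1) (Fin.snoc h i) j
        = if j = i then X k h j - (1/v j)*g (X k h) j else X k h j)
    (xstar : Fin n → ℝ) (hmin : ∀ u, f xstar ≤ f u) :
    ∀ k : ℕ, 1 ≤ k →
      (∑ h : Fin k → Fin n, ((1:ℝ)/n)^k * f (X k h)) - f xstar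
        ≤ ((n:ℝ)/((k:ℝ)-1+n))
          * ((1 - 1/(n:ℝ))*(f x0 - f xstar)
              + 1/2 * ∑ i, v i * (x0 i - xstar i)^2) := by
  have hN : (0:ℝ) < n := Nat.cast_pos.mpr hn
  have hNe : (n:ℝ) ≠ 0 := hN.ne'
  set D : (Fin n → ℝ) → ℝ := fun y => 1/2 * ∑ j, v j * (y j - xstar j)^2 with hDdef
  set A : ℕ → ℝ := fun m => ∑ h : Fin m → Fin n, ((1:ℝ)/n)^m * f (X m h) with hAdef
  set B : ℕ → ℝ := fun m => ∑ h : Fin m → Fin n, ((1:ℝ)/n)^m * D (X m h) with hBdef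
  set C : ℝ := (1 - 1/(n:ℝ))*(f x0 - f xstar) + D x0 with hCdef
  -- the update in vector form
  have hupd' : ∀ (m : ℕ) (h : Fin m → Fin n) (i : Fin n),
      X (m+1) (Fin.snoc h i) = X m h + Pi.single i (-(1/v i * g (X m h) i)) := by
    intro m h i
    funext j
    rw [hupd, Pi.add_apply, Pi.single_apply]
    by_cases hji : j = i
    · subst hji; rw [if_pos rfl, if_pos rfl]; ring
    · rw [if_neg hji, if_neg hji, add_zero]
  -- shift formula for D
  have hDshift : ∀ (x : Fin n → ℝ) (i : Fin n) (t : ℝ),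
      D (x + Pi.single i t) = D x + v i * (x i - xstar i) * t + (v i/2) * t^2 := by
    intro x i t
    have key : ∀ j : Fin n, v j * (x j + (if j = i then t else 0) - xstar j)^2
        = v j * (x j - xstar j)^2
          + (if j = i then 2 * v i * (x i - xstar i) * t + v i * t^2 else 0) := by
      intro j
      by_cases hji : j = i
      · subst hji; rw [if_pos rfl, if_pos rfl]; ring
      · rw [if_neg hji, if_neg hji]; ring
    simp only [hDdef, Pi.add_apply, Pi.single_apply]
    rw [Finset.sum_congr rfl fun j _ => key j, Finset.sum_add_distrib,
      Finset.sum_ite_eq' Finset.univ i (fun _ => 2 * v i * (x i - xstar i) * t + v i * t^2),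
      if_pos (Finset.mem_univ i)]
    ring
  -- per-coordinate descent
  have hstep : ∀ (x : Fin n → ℝ) (i : Fin n),
      f (x + Pi.single i (-(1/v i * g x i))) + D (x + Pi.single i (-(1/v i * g x i)))
        ≤ f x + D x - g x i * (x i - xstar i) := by
    intro x i
    have h1 := hL x i (-(1/v i * g x i))
    have h2 := hDshift x i (-(1/v i * g x i))
    have hvi := hv i
    have e1 : g x i * (-(1/v i * g x i)) + (v i/2)*(-(1/v i * g x i))^2
        = -((g x i)^2/(2 * v i)) := by field_simp; ring
    have e2 : v i * (x i - xstar i) * (-(1/v i * g x i)) + (v i/2) * (-(1/v i * g x i))^2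
        = -(g x i * (x i - xstar i)) + (g x i)^2/(2 * v i) := by field_simp
    linarith [h1, h2, e1, e2]
  -- monotone per coordinate
  have hmono1 : ∀ (x : Fin n → ℝ) (i : Fin n),
      f (x + Pi.single i (-(1/v i * g x i))) ≤ f x := by
    intro x i
    have h1 := hL x i (-(1/v i * g x i))
    have hvi := hv i
    have e1 : g x i * (-(1/v i * g x i)) + (v i/2)*(-(1/v i * g x i))^2
        = -((g x i)^2/(2 * v i)) := by field_simp; ring
    have h3 : 0 ≤ (g x i)^2/(2*v i) := by positivity
    linarith [h1, e1, h3]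
  -- convexity lower bound
  have hcv : ∀ x : Fin n → ℝ, f x - f xstar ≤ ∑ i, g x i * (x i - xstar i) := by
    intro x
    have h := hconv x xstar
    have e : ∑ i, g x i * (xstar i - x i) = -∑ i, g x i * (x i - xstar i) := by
      rw [← Finset.sum_neg_distrib]
      exact Finset.sum_congr rfl fun i _ => by ring
    rw [e] at h
    linarith
  -- weighted averages
  have eAB : ∀ m : ℕ, ∑ h : Fin m → Fin n, ((1:ℝ)/n)^m * (f (X m h) + D (X m h))
      = A m + B m := by
    intro m
    simp only [hAdef, hBdef]
    rw [← Finset.sum_add_distrib]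
    exact Finset.sum_congr rfl fun h _ => by ring
  have eA : ∀ m : ℕ, ∑ h : Fin m → Fin n, ((1:ℝ)/n)^m * (f (X m h) - f xstar)
      = A m - f xstar := by
    intro m
    have e : ∑ h : Fin m → Fin n, ((1:ℝ)/n)^m * (f (X m h) - f xstar)
        = (∑ h : Fin m → Fin n, ((1:ℝ)/n)^m * f (X m h))
          - (∑ _h : Fin m → Fin n, ((1:ℝ)/n)^m) * f xstar := by
      rw [Finset.sum_mul, ← Finset.sum_sub_distrib]
      exact Finset.sum_congr rfl fun h _ => by ring
    rw [e, weight_sum_one hn m, one_mul]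
  -- key recursion
  have hrec : ∀ m : ℕ, A (m+1) + B (m+1) + (1/(n:ℝ)) * (A m - f xstar) ≤ A m + B m := by
    intro m
    have hAB : A (m+1) + B (m+1)
        = ∑ h : Fin m → Fin n, ∑ i : Fin n,
            ((1:ℝ)/n)^(m+1) * (f (X (m+1) (Fin.snoc h i)) + D (X (m+1) (Fin.snoc h i))) := by
      rw [← eAB (m+1),
        sum_snoc_aux (fun h' => ((1:ℝ)/n)^(m+1) * (f (X (m+1) h') + D (X (m+1) h')))]
    have hinner : ∀ h : Fin m → Fin n,
        ∑ i : Fin n, (f (X (m+1) (Fin.snoc h i)) + D (X (m+1) (Fin.snoc h i)))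
          ≤ (n:ℝ) * (f (X m h) + D (X m h)) - (f (X m h) - f xstar) := by
      intro h
      calc ∑ i : Fin n, (f (X (m+1) (Fin.snoc h i)) + D (X (m+1) (Fin.snoc h i)))
          ≤ ∑ i : Fin n, (f (X m h) + D (X m h) - g (X m h) i * (X m h i - xstar i)) := by
            refine Finset.sum_le_sum fun i _ => ?_
            rw [hupd']
            exact hstep (X m h) i
        _ = (n:ℝ) * (f (X m h) + D (X m h)) - ∑ i, g (X m h) i * (X m h i - xstar i) := by
            rw [Finset.sum_sub_distrib, Finset.sum_const, Finset.card_univ, Fintype.card_fin,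
              nsmul_eq_mul]
        _ ≤ (n:ℝ) * (f (X m h) + D (X m h)) - (f (X m h) - f xstar) := by
            linarith [hcv (X m h)]
    have main : A (m+1) + B (m+1) ≤ A m + B m - (1/(n:ℝ)) * (A m - f xstar) := by
      rw [hAB]
      calc ∑ h : Fin m → Fin n, ∑ i : Fin n,
              ((1:ℝ)/n)^(m+1) * (f (X (m+1) (Fin.snoc h i)) + D (X (m+1) (Fin.snoc h i)))
          = ∑ h : Fin m → Fin n, ((1:ℝ)/n)^(m+1) *
              ∑ i : Fin n, (f (X (m+1) (Fin.snoc h i)) + D (X (m+1) (Fin.snoc h i))) :=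
            Finset.sum_congr rfl fun h _ => (Finset.mul_sum _ _ _).symm
        _ ≤ ∑ h : Fin m → Fin n, ((1:ℝ)/n)^(m+1) *
              ((n:ℝ) * (f (X m h) + D (X m h)) - (f (X m h) - f xstar)) := by
            refine Finset.sum_le_sum fun h _ => ?_
            exact mul_le_mul_of_nonneg_left (hinner h) (by positivity)
        _ = ∑ h : Fin m → Fin n, (((1:ℝ)/n)^m * (f (X m h) + D (X m h))
              - (1/(n:ℝ)) * (((1:ℝ)/n)^m * (f (X m h) - f xstar))) := by
            exact Finset.sum_congr rfl fun h _ => pow_step2 hNe m _ _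
        _ = A m + B m - (1/(n:ℝ)) * (A m - f xstar) := by
            rw [Finset.sum_sub_distrib, eAB m, ← Finset.mul_sum, eA m]
    linarith
  -- monotonicity of A
  have hAmono : ∀ m : ℕ, A (m+1) ≤ A m := by
    intro m
    have h1 : A (m+1) = ∑ h : Fin m → Fin n, ∑ i : Fin n,
        ((1:ℝ)/n)^(m+1) * f (X (m+1) (Fin.snoc h i)) := by
      simp only [hAdef]
      exact sum_snoc_aux (fun h' => ((1:ℝ)/n)^(m+1) * f (X (m+1) h'))
    rw [h1]
    calc ∑ h : Fin m → Fin n, ∑ i : Fin n, ((1:ℝ)/n)^(m+1) * f (X (m+1) (Fin.snoc h i))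
        ≤ ∑ h : Fin m → Fin n, ∑ _i : Fin n, ((1:ℝ)/n)^(m+1) * f (X m h) := by
          refine Finset.sum_le_sum fun h _ => Finset.sum_le_sum fun i _ => ?_
          refine mul_le_mul_of_nonneg_left ?_ (by positivity)
          rw [hupd']
          exact hmono1 (X m h) i
      _ = A m := by
          simp only [hAdef]
          refine Finset.sum_congr rfl fun h _ => ?_
          rw [Finset.sum_const, Finset.card_univ, Fintype.card_fin, nsmul_eq_mul]
          exact pow_step hNe m _
  have hAmono' : ∀ j m : ℕ, j ≤ m → A m ≤ A j := by
    intro j m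
    induction m with
    | zero =>
      intro hjm
      have h0 : j = 0 := Nat.le_zero.mp hjm
      subst h0; exact le_rfl
    | succ m ih =>
      intro hjm
      rcases Nat.lt_or_ge j (m+1) with hlt | hge
      · exact le_trans (hAmono m) (ih (Nat.lt_succ_iff.mp hlt))
      · have hjm1 : j = m + 1 := le_antisymm hjm hge
        subst hjm1; exact le_rfl
  -- lower bound on A
  have hAlb : ∀ m : ℕ, f xstar ≤ A m := by
    intro m
    have h1 : ∑ h : Fin m → Fin n, ((1:ℝ)/n)^m * f xstar ≤ A m := by
      simp only [hAdef]
      exact Finset.sum_le_sum fun h _ =>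
        mul_le_mul_of_nonneg_left (hmin _) (by positivity)
    rwa [← Finset.sum_mul, weight_sum_one hn m, one_mul] at h1
  have hBnn : ∀ m : ℕ, 0 ≤ B m := by
    intro m
    refine Finset.sum_nonneg fun h _ => ?_
    refine mul_nonneg (by positivity) ?_
    refine mul_nonneg (by norm_num) (Finset.sum_nonneg fun j _ => ?_)
    exact mul_nonneg (hv j).le (sq_nonneg _)
  -- initial values
  have hA0 : A 0 = f x0 := by
    simp only [hAdef]
    rw [Fintype.sum_unique]
    simp [hX0]
  have hB0 : B 0 = D x0 := by
    simp only [hBdef]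
    rw [Fintype.sum_unique]
    simp [hX0]
  -- the summed inequality, by induction
  have hP : ∀ m : ℕ, 1 ≤ m →
      A m + B m + (1/(n:ℝ)) * ∑ j ∈ Finset.Ico 1 m, (A j - f xstar) ≤ f xstar + C := by
    intro m hm
    induction m with
    | zero => omega
    | succ m ih =>
      rcases Nat.eq_zero_or_pos m with h0 | hm1
      · subst h0
        simp only [Finset.Ico_self, Finset.sum_empty, mul_zero, add_zero]
        have h := hrec 0
        rw [hA0, hB0] at h
        rw [hCdef]
        linarith
      · have ihm := ih hm1
        have hrecm := hrec m
        rw [Finset.sum_Ico_succ_top hm1]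
        linarith
  -- conclude
  intro k hk
  have hPk := hP k hk
  have hAk := hAlb k
  have hsum : (↑(k-1) : ℝ) * (A k - f xstar) ≤ ∑ j ∈ Finset.Ico 1 k, (A j - f xstar) := by
    have hb : ∀ j ∈ Finset.Ico 1 k, A k - f xstar ≤ A j - f xstar := by
      intro j hj
      have hjk : j ≤ k := (Finset.mem_Ico.mp hj).2.le
      linarith [hAmono' j k hjk]
    calc (↑(k-1) : ℝ) * (A k - f xstar)
        = ∑ _j ∈ Finset.Ico 1 k, (A k - f xstar) := by
          rw [Finset.sum_const, Nat.card_Ico, nsmul_eq_mul]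
      _ ≤ _ := Finset.sum_le_sum hb
  have hcast : (↑(k-1) : ℝ) = (k:ℝ) - 1 := by
    rw [Nat.cast_sub hk, Nat.cast_one]
  rw [hcast] at hsum
  have hBk := hBnn k
  have hsumnn : 0 ≤ (1/(n:ℝ)) * ∑ j ∈ Finset.Ico 1 k, (A j - f xstar) := by
    refine mul_nonneg (by positivity) (Finset.sum_nonneg fun j _ => ?_)
    linarith [hAlb j]
  have hkey : (A k - f xstar) + (1/(n:ℝ)) * (((k:ℝ)-1) * (A k - f xstar)) ≤ C := by
    have h1 : (1/(n:ℝ)) * (((k:ℝ)-1) * (A k - f xstar))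
        ≤ (1/(n:ℝ)) * ∑ j ∈ Finset.Ico 1 k, (A j - f xstar) :=
      mul_le_mul_of_nonneg_left hsum (by positivity)
    linarith
  have hpos : (0:ℝ) < (k:ℝ) - 1 + n := by
    have h1 : (1:ℝ) ≤ (k:ℝ) := by exact_mod_cast hk
    linarith
  have hgoal : A k - f xstar ≤ ((n:ℝ)/((k:ℝ)-1+n)) * C := by
    rw [div_mul_eq_mul_div, le_div_iff₀ hpos]
    have h2 := mul_le_mul_of_nonneg_left hkey hN.le
    calc (A k - f xstar) * ((k:ℝ) - 1 + n)
        = (n:ℝ) * ((A k - f xstar) + (1/(n:ℝ)) * (((k:ℝ)-1) * (A k - f xstar))) := by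
          field_simp; ring
      _ ≤ (n:ℝ) * C := h2
  simp only [hAdef, hCdef, hDdef] at hgoal
  exact hgoal
end
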